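/- Every digital Jordan curve in the Khalimsky plane consists of an even number of points. -/

import Mathlib

open Set

/-- The minimal open neighborhood of a point in a topological space. -/
def minOpenNhd {X : Type*} (t : TopologicalSpace X) (x : X) : Set X :=
  ⋂₀ {U : Set X | t.IsOpen U ∧ x ∈ U}

/-- The specialization-style preorder: `x ≤ y` iff `U_x ⊆ U_y`. -/
def specLE {X : Type*} (t : TopologicalSpace X) (x y : X) : Prop :=
  minOpenNhd t x ⊆ minOpenNhd t y

/-- Two points are adjacent if distinct and comparable in the specialization order. -/
def Adjacent {X : Type*} (t : TopologicalSpace X) (x y : X) : Prop :=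
  x ≠ y ∧ (specLE t x y ∨ specLE t y x)

/-- The adjacency set of a point. -/
def adjSet {X : Type*} (t : TopologicalSpace X) (x : X) : Set X := {y | Adjacent t x y}

/-- A COTS: a connected space in which every 3-point subset has a point separating
the other two. -/
def IsCOTS {X : Type*} (t : TopologicalSpace X) : Prop :=
  @ConnectedSpace X t ∧
    ∀ Y : Set X, Y.ncard = 3 →
      ∃ y ∈ Y, ∃ a ∈ Y \ {y}, ∃ b ∈ Y \ {y},
        @connectedComponentIn X t {y}ᶜ a ≠ @connectedComponentIn X t {y}ᶜ b

/-- An endpoint of a COTS: a point with at most one neighbor. -/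
def IsEndpoint {X : Type*} (t : TopologicalSpace X) (x : X) : Prop :=
  (adjSet t x).ncard ≤ 1

/-- A COTS-path: the continuous image of a finite COTS. -/
def IsCOTSPath {Y : Type*} (tY : TopologicalSpace Y) (P : Set Y) : Prop :=
  ∃ (C : Type) (tC : TopologicalSpace C), Finite C ∧ IsCOTS tC ∧
    ∃ f : C → Y, @Continuous C Y tC tY f ∧ Set.range f = P

/-- A COTS-path with prescribed start and end points. -/
def IsCOTSPathFromTo {Y : Type*} (tY : TopologicalSpace Y) (P : Set Y) (a b : Y) : Prop :=
  ∃ (C : Type) (tC : TopologicalSpace C), Finite C ∧ IsCOTS tC ∧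
    ∃ f : C → Y, @Continuous C Y tC tY f ∧ Set.range f = P ∧
      ∃ c₀ c₁ : C, IsEndpoint tC c₀ ∧ IsEndpoint tC c₁ ∧ f c₀ = a ∧ f c₁ = b

/-- A COTS-arc: the homeomorphic image of a finite COTS. -/
def IsCOTSArc {Y : Type*} (tY : TopologicalSpace Y) (A : Set Y) : Prop :=
  ∃ (C : Type) (tC : TopologicalSpace C), Finite C ∧ IsCOTS tC ∧
    ∃ f : C → Y, @Topology.IsEmbedding C Y tC tY f ∧ Set.range f = A

/-- A COTS-arc with prescribed endpoints. -/
def IsCOTSArcFromTo {Y : Type*} (tY : TopologicalSpace Y) (A : Set Y) (a b : Y) : Prop :=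
  ∃ (C : Type) (tC : TopologicalSpace C), Finite C ∧ IsCOTS tC ∧
    ∃ f : C → Y, @Topology.IsEmbedding C Y tC tY f ∧ Set.range f = A ∧
      ∃ c₀ c₁ : C, IsEndpoint tC c₀ ∧ IsEndpoint tC c₁ ∧ f c₀ = a ∧ f c₁ = b

/-- The COTS-distance: one less than the minimal cardinality of a COTS-arc
joining two points (`⊤` if there is no such arc). -/
noncomputable def cotsDist {X : Type*} (t : TopologicalSpace X) (x y : X) : ℕ∞ :=
  sInf {n : ℕ∞ | ∃ A : Set X, IsCOTSArcFromTo t A x y ∧ (A.ncard : ℕ∞) = n + 1}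

/-- The Khalimsky topology on ℤ. -/
def khal : TopologicalSpace ℤ :=
  TopologicalSpace.generateFrom
    {s : Set ℤ | ∃ n : ℤ, (Odd n ∧ s = {n}) ∨ (Even n ∧ s = {n - 1, n, n + 1})}

/-- The Khalimsky plane topology on ℤ × ℤ. -/
def khalPlane : TopologicalSpace (ℤ × ℤ) := @instTopologicalSpaceProd ℤ ℤ khal khal

/-- A point of the Khalimsky plane is pure if its coordinates have the same parity. -/
def IsPurePt (p : ℤ × ℤ) : Prop := (Even p.1 ∧ Even p.2) ∨ (Odd p.1 ∧ Odd p.2)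

/-- A digital Jordan curve: a finite set of at least 4 points such that removing
any point leaves a COTS-arc. -/
def IsJordanCurve {X : Type*} (t : TopologicalSpace X) (J : Set X) : Prop :=
  J.Finite ∧ 4 ≤ J.ncard ∧ ∀ j ∈ J, IsCOTSArc t (J \ {j})

/-- The interior of a digital Jordan curve in the Khalimsky plane: the union of the
finite (bounded) connected components of its complement. -/
def jInterior (J : Set (ℤ × ℤ)) : Set (ℤ × ℤ) :=
  ⋃₀ {S | ∃ p ∉ J, S = @connectedComponentIn _ khalPlane Jᶜ p ∧ S.Finite}


/-!
Adjacency is comparability for specialization, which embeddings preserve and reflect, so a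
COTS-arc inherits the local structure of a finite COTS: every point has one or two neighbours
and no three points are pairwise adjacent. Deleting a well-chosen point of a Jordan curve `J`
with at least five points therefore shows that every point of `J` has exactly two neighbours
in `J`. In a T₀ space specialization is antisymmetric, and the absence of triangles makes
every pair of adjacent points of `J` consist of one point that is minimal in `J` and one that
is not. The adjacency graph on `J` is thus 2-regular and bipartite, so its two colour classes
have the same size.
-/

open Topology

theorem Set.Finite.even_ncard_of_bipartite_of_regular {α : Type*} {s : Set α} (hs : s.Finite)
    {r : α → α → Prop} (hr : ∀ x y, r x y → r y x) (P : α → Prop)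
    (hP : ∀ x ∈ s, ∀ y ∈ s, r x y → (P x ↔ ¬ P y)) {k : ℕ} (hk : k ≠ 0)
    (hreg : ∀ x ∈ s, (s ∩ {y | r x y}).ncard = k) : Even s.ncard := by
  classical
  lift s to Finset α using hs
  have hdeg : ∀ x ∈ s, (s.filter (r x)).card = k := fun x hx => by
    rw [← hreg x (Finset.mem_coe.2 hx), ← Set.ncard_coe_finset, Finset.coe_filter]
    rfl
  have hbalance := Finset.card_mul_eq_card_mul r (s := s.filter P) (t := s.filter (¬ P ·))
    (m := k) (n := k)
    (fun x hx => by
      rw [Finset.mem_filter] at hx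
      rw [← hdeg x hx.1, Finset.bipartiteAbove, Finset.filter_filter]
      exact congrArg _ <| Finset.filter_congr fun y hy =>
        ⟨And.right, fun hxy => ⟨(hP x hx.1 y hy hxy).1 hx.2, hxy⟩⟩)
    (fun y hy => by
      rw [Finset.mem_filter] at hy
      rw [← hdeg y hy.1, Finset.bipartiteBelow, Finset.filter_filter]
      exact congrArg _ <| Finset.filter_congr fun x hx =>
        ⟨fun h => hr x y h.2,
          fun hyx => ⟨(hP x hx y hy.1 (hr y x hyx)).2 hy.2, hr y x hyx⟩⟩)
  rw [Set.ncard_coe_finset, ← Finset.card_filter_add_card_filter_not P,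
    Nat.eq_of_mul_eq_mul_right (Nat.pos_of_ne_zero hk) hbalance]
  exact ⟨_, rfl⟩

section Specialization

variable {X Y : Type*} [t : TopologicalSpace X] {x y : X}

theorem minOpenNhd_eq_nhdsKer (x : X) : minOpenNhd t x = nhdsKer {x} := by
  simp only [minOpenNhd, nhdsKer_def, singleton_subset_iff]
  rfl

theorem specLE_iff_specializes : specLE t x y ↔ x ⤳ y := by
  rw [specLE, minOpenNhd_eq_nhdsKer, minOpenNhd_eq_nhdsKer, specializes_iff_nhdsKer_subset]

theorem adjacent_iff : Adjacent t x y ↔ x ≠ y ∧ (x ⤳ y ∨ y ⤳ x) := by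
  simp only [Adjacent, specLE_iff_specializes]

theorem Adjacent.symm (h : Adjacent t x y) : Adjacent t y x :=
  ⟨h.1.symm, h.2.symm⟩

instance : Std.Symm (Adjacent t) := ⟨fun _ _ => Adjacent.symm⟩

theorem Adjacent.connectedComponentIn_eq {F : Set X} (h : Adjacent t x y) (hx : x ∈ F)
    (hy : y ∈ F) : connectedComponentIn F x = connectedComponentIn F y := by
  wlog hxy : x ⤳ y generalizing x y
  · exact (this h.symm hy hx ((adjacent_iff.1 h).2.resolve_left hxy)).symm
  have hpair : IsPreconnected ({x, y} : Set X) :=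
    isPreconnected_singleton.subset_closure (singleton_subset_iff.2 (mem_insert x {y}))
      (insert_subset (subset_closure (mem_singleton x)) (singleton_subset_iff.2 hxy.mem_closure))
  exact _root_.connectedComponentIn_eq <| hpair.subset_connectedComponentIn (mem_insert _ _)
    (insert_subset hx (singleton_subset_iff.2 hy)) (mem_insert_of_mem _ rfl)

theorem Topology.IsEmbedding.adjacent_iff [tY : TopologicalSpace Y] {f : X → Y}
    (hf : IsEmbedding f) {a b : X} : Adjacent tY (f a) (f b) ↔ Adjacent t a b := by
  rw [_root_.adjacent_iff, _root_.adjacent_iff, hf.injective.ne_iff,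
    hf.isInducing.specializes_iff, hf.isInducing.specializes_iff]

theorem Topology.IsEmbedding.image_adjSet [tY : TopologicalSpace Y] {f : X → Y}
    (hf : IsEmbedding f) (x : X) : f '' adjSet t x = range f ∩ adjSet tY (f x) := by
  ext y
  constructor
  · rintro ⟨z, hz, rfl⟩
    exact ⟨mem_range_self z, hf.adjacent_iff.2 hz⟩
  · rintro ⟨⟨z, rfl⟩, hz⟩
    exact ⟨z, hf.adjacent_iff.1 hz, rfl⟩

end Specialization

section COTS

variable {X : Type*} [t : TopologicalSpace X]

theorem IsCOTS.ncard_adjSet_le_two (h : IsCOTS t) (x : X) : (adjSet t x).ncard ≤ 2 := by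
  by_contra! hlt
  obtain ⟨a, ha, b, hb, c, hc, hab, hac, hbc⟩ :=
    (Set.two_lt_ncard (Set.finite_of_ncard_pos (by omega))).1 hlt
  obtain ⟨y, hy, p, hp, q, hq, hpq⟩ :=
    h.2 {a, b, c} (ncard_eq_three.2 ⟨a, b, c, hab, hac, hbc, rfl⟩)
  have hsub : {a, b, c} ⊆ adjSet t x := by simp [insert_subset_iff, *]
  have hx : x ∈ ({y}ᶜ : Set X) := (hsub hy).1
  exact hpq (((hsub hp.1).connectedComponentIn_eq hx hp.2).symm.trans
    ((hsub hq.1).connectedComponentIn_eq hx hq.2))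

theorem IsCOTS.not_adjacent_of_adjacent (h : IsCOTS t) {a b c : X} (hab : Adjacent t a b)
    (hbc : Adjacent t b c) : ¬ Adjacent t a c := by
  intro hac
  obtain ⟨y, hy, p, hp, q, hq, hpq⟩ :=
    h.2 {a, b, c} (ncard_eq_three.2 ⟨a, b, c, hab.1, hac.1, hbc.1, rfl⟩)
  have hpair : ({a, b, c} : Set X).Pairwise (Adjacent t) := by
    simp [pairwise_insert_of_symm, *]
  rcases eq_or_ne p q with rfl | hne
  · exact hpq rfl
  · exact hpq ((hpair hp.1 hq.1 hne).connectedComponentIn_eq hp.2 hq.2)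

theorem adjSet_nonempty [AlexandrovDiscrete X] [ConnectedSpace X] [Nontrivial X] (x : X) :
    (adjSet t x).Nonempty := by
  by_contra! hx
  have hspec : ∀ y, x ⤳ y ∨ y ⤳ x → y = x := fun y hy => by
    by_contra hyx
    exact (eq_empty_iff_forall_notMem.1 hx) y (adjacent_iff.2 ⟨Ne.symm hyx, hy⟩)
  have hopen : IsOpen ({x} : Set X) := by
    rw [← nhdsKer_subset_iff_isOpen]
    exact fun y hy => hspec y (Or.inr (mem_nhdsKer_singleton.1 hy))
  have hclosed : IsClosed ({x} : Set X) :=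
    isClosed_of_closure_subset fun y hy => hspec y (Or.inl (specializes_iff_mem_closure.2 hy))
  have hx_univ : ({x} : Set X) = univ :=
    IsClopen.eq_univ ⟨hclosed, hopen⟩ (singleton_nonempty x)
  obtain ⟨y, hyx⟩ := exists_ne x
  exact hyx (eq_univ_iff_forall.1 hx_univ y)

end COTS

section Arc

variable {Y : Type*} [t : TopologicalSpace Y] {A : Set Y} {x : Y}

theorem IsCOTSArc.ncard_inter_adjSet_le_two (hA : IsCOTSArc t A) (hx : x ∈ A) :
    (A ∩ adjSet t x).ncard ≤ 2 := by
  obtain ⟨C, tC, -, hcots, f, hf, rfl⟩ := hA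
  obtain ⟨c, rfl⟩ := hx
  rw [← hf.image_adjSet, ncard_image_of_injective _ hf.injective]
  exact hcots.ncard_adjSet_le_two c

theorem IsCOTSArc.inter_adjSet_nonempty (hA : IsCOTSArc t A) (hA₂ : A.Nontrivial) (hx : x ∈ A) :
    (A ∩ adjSet t x).Nonempty := by
  obtain ⟨C, tC, hC, ⟨hconn, -⟩, f, hf, rfl⟩ := hA
  obtain ⟨c, rfl⟩ := hx
  obtain ⟨-, ⟨a, rfl⟩, -, ⟨b, rfl⟩, hab⟩ := hA₂
  have : Nontrivial C := ⟨⟨a, b, ne_of_apply_ne f hab⟩⟩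
  rw [← hf.image_adjSet]
  exact (adjSet_nonempty c).image f

theorem IsCOTSArc.not_adjacent_of_adjacent (hA : IsCOTSArc t A) {a b c : Y} (ha : a ∈ A)
    (hb : b ∈ A) (hc : c ∈ A) (hab : Adjacent t a b) (hbc : Adjacent t b c) :
    ¬ Adjacent t a c := by
  obtain ⟨C, tC, -, hcots, f, hf, rfl⟩ := hA
  obtain ⟨a, rfl⟩ := ha
  obtain ⟨b, rfl⟩ := hb
  obtain ⟨c, rfl⟩ := hc
  rw [hf.adjacent_iff] at hab hbc ⊢
  exact hcots.not_adjacent_of_adjacent hab hbc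

end Arc

namespace IsJordanCurve

variable {Y : Type*} [t : TopologicalSpace Y] {J : Set Y} {x : Y}

theorem exists_isCOTSArc_superset (hJ : IsJordanCurve t J) {S : Set Y} (hSJ : S ⊆ J)
    (hS : S.ncard < J.ncard) : ∃ A ⊆ J, IsCOTSArc t A ∧ S ⊆ A := by
  obtain ⟨d, hd, hdS⟩ := exists_mem_notMem_of_ncard_lt_ncard hS (hJ.1.subset hSJ)
  exact ⟨J \ {d}, sdiff_subset, hJ.2.2 d hd,
    fun z hz => ⟨hSJ hz, fun hzd => hdS (hzd ▸ hz)⟩⟩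

theorem not_adjacent_of_adjacent (hJ : IsJordanCurve t J) {a b c : Y} (ha : a ∈ J)
    (hb : b ∈ J) (hc : c ∈ J) (hab : Adjacent t a b) (hbc : Adjacent t b c) :
    ¬ Adjacent t a c := by
  intro hac
  have h4 := hJ.2.1
  have habc : ({a, b, c} : Set Y).ncard = 3 :=
    ncard_eq_three.2 ⟨a, b, c, hab.1, hac.1, hbc.1, rfl⟩
  obtain ⟨A, -, hA, hsub⟩ := hJ.exists_isCOTSArc_superset (by simp [insert_subset_iff, *])
    (by omega : ({a, b, c} : Set Y).ncard < J.ncard)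
  exact hA.not_adjacent_of_adjacent (hsub (by simp)) (hsub (by simp)) (hsub (by simp)) hab hbc hac

theorem ncard_inter_adjSet_le_two (hJ : IsJordanCurve t J) (h5 : 4 < J.ncard) (hx : x ∈ J) :
    (J ∩ adjSet t x).ncard ≤ 2 := by
  by_contra! hlt
  obtain ⟨a, ha, b, hb, c, hc, hab, hac, hbc⟩ := (two_lt_ncard (hJ.1.inter_of_left _)).1 hlt
  have habc : ({a, b, c} : Set Y).ncard = 3 := ncard_eq_three.2 ⟨a, b, c, hab, hac, hbc, rfl⟩
  obtain ⟨A, hAJ, hA, hsub⟩ := hJ.exists_isCOTSArc_superset (S := insert x {a, b, c})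
    (by simp [insert_subset_iff, *, ha.1, hb.1, hc.1])
    ((ncard_insert_le x _).trans_lt (by omega))
  have : ({a, b, c} : Set Y) ⊆ A ∩ adjSet t x := by
    simp only [insert_subset_iff, singleton_subset_iff]
    exact ⟨⟨hsub (by simp), ha.2⟩, ⟨hsub (by simp), hb.2⟩, ⟨hsub (by simp), hc.2⟩⟩
  have := ncard_le_ncard this ((hJ.1.subset hAJ).inter_of_left _)
  have := hA.ncard_inter_adjSet_le_two (hsub (mem_insert x _))
  omega

theorem two_le_ncard_inter_adjSet (hJ : IsJordanCurve t J) (hx : x ∈ J) :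
    2 ≤ (J ∩ adjSet t x).ncard := by
  have h4 := hJ.2.1
  have hdel : ∀ d ∈ J, d ≠ x → ((J ∩ adjSet t x) \ {d}).Nonempty := fun d hd hdx => by
    rw [← sdiff_inter_right_comm]
    have : 1 < (J \ {d}).ncard := by rw [ncard_sdiff_singleton_of_mem hd]; omega
    exact (hJ.2.2 d hd).inter_adjSet_nonempty (one_lt_ncard_iff_nontrivial_and_finite.1 this).1
      ⟨hx, hdx.symm⟩
  obtain ⟨d, hd, hdx⟩ := exists_ne_of_one_lt_ncard (by omega : 1 < J.ncard) x
  obtain ⟨a, ha, -⟩ := hdel d hd hdx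
  obtain ⟨b, hb, hba⟩ := hdel a ha.1 ha.2.1.symm
  exact (one_lt_ncard (hJ.1.inter_of_left _)).2 ⟨b, hb, a, ha, hba⟩

theorem minimal_iff_not_minimal_of_adjacent [T0Space Y] (hJ : IsJordanCurve t J) {x y : Y}
    (hx : x ∈ J) (hy : y ∈ J) (hxy : Adjacent t x y) :
    (∀ z ∈ J, z ⤳ x → z = x) ↔ ¬ ∀ z ∈ J, z ⤳ y → z = y := by
  suffices key : ∀ {x y}, x ∈ J → y ∈ J → x ≠ y → x ⤳ y →
      (∀ z ∈ J, z ⤳ x → z = x) ∧ ¬ ∀ z ∈ J, z ⤳ y → z = y by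
    rcases (adjacent_iff.1 hxy).2 with h | h
    · have := key hx hy hxy.1 h; tauto
    · have := key hy hx hxy.1.symm h; tauto
  intro x y hx hy hne hxy
  refine ⟨fun z hz hzx => ?_, fun hmin => hne (hmin x hx hxy)⟩
  by_contra hzx'
  have hzy : z ≠ y := by
    rintro rfl
    exact hne (hxy.antisymm hzx).eq
  exact hJ.not_adjacent_of_adjacent hz hx hy (adjacent_iff.2 ⟨hzx', .inl hzx⟩)
    (adjacent_iff.2 ⟨hne, .inl hxy⟩) (adjacent_iff.2 ⟨hzy, .inl (hzx.trans hxy)⟩)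

theorem even_ncard [T0Space Y] (hJ : IsJordanCurve t J) : Even J.ncard := by
  rcases hJ.2.1.eq_or_lt with h4 | h5
  · exact h4 ▸ ⟨2, rfl⟩
  exact hJ.1.even_ncard_of_bipartite_of_regular (fun _ _ => Adjacent.symm)
    (fun x => ∀ z ∈ J, z ⤳ x → z = x)
    (fun x hx y hy => hJ.minimal_iff_not_minimal_of_adjacent hx hy)
    two_ne_zero fun x hx =>
      (hJ.ncard_inter_adjSet_le_two h5 hx).antisymm (hJ.two_le_ncard_inter_adjSet hx)

end IsJordanCurve

theorem khal_isOpen_singleton {n : ℤ} (hn : Odd n) : khal.IsOpen {n} :=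
  TopologicalSpace.isOpen_generateFrom_of_mem ⟨n, .inl ⟨hn, rfl⟩⟩

theorem khal_isOpen_triple {n : ℤ} (hn : Even n) : khal.IsOpen {n - 1, n, n + 1} :=
  TopologicalSpace.isOpen_generateFrom_of_mem ⟨n, .inr ⟨hn, rfl⟩⟩

theorem khal_t0Space : @T0Space ℤ khal := by
  let := khal
  refine (t0Space_iff_exists_isOpen_xor_mem ℤ).2 fun m n hmn => ?_
  rcases Int.even_or_odd m with hm | hm
  · rcases Int.even_or_odd n with hn | hn
    · refine ⟨_, khal_isOpen_triple hm, ?_⟩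
      obtain ⟨a, rfl⟩ := hm
      obtain ⟨b, rfl⟩ := hn
      simp only [mem_insert_iff, mem_singleton_iff, true_or, or_true, xor_true]
      omega
    · exact ⟨{n}, khal_isOpen_singleton hn, by simp [hmn]⟩
  · exact ⟨{m}, khal_isOpen_singleton hm, by simp [hmn.symm]⟩

theorem khalPlane_t0Space : @T0Space (ℤ × ℤ) khalPlane :=
  @Prod.instT0Space ℤ ℤ khal khal khal_t0Space khal_t0Space

/-- Every digital Jordan curve in the Khalimsky plane has an even number of points. -/
theorem stmt13 (J : Set (ℤ × ℤ)) (h : IsJordanCurve khalPlane J) :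
    Even J.ncard :=
  letI := khalPlane
  haveI := khalPlane_t0Space
  h.even_ncard
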